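/- Define the deterministic Sparse-Vector-with-Gap output function SVT(q, T, k, η, η⃗) as follows: process the real-valued sequence q = (q₁, …, qₙ) in order; at step i, if qᵢ + ηᵢ − (T + η) ≥ 0, output the gap qᵢ + ηᵢ − (T + η) (a nonnegative real) and increment a counter; otherwise output ⊥; stop as soon as the counter reaches k (or after all n queries). Let q and q′ be two real sequences of the same length n with |qᵢ − qᵢ′| ≤ 1 for all i, let η, η₁, …, ηₙ be real noise values, and let ω = SVT(q, T, k, η, η⃗). Define η′ = η + 1 and, for each i, ηᵢ′ = ηᵢ + (1 + qᵢ − qᵢ′) if the i-th entry of ω is a gap, and ηᵢ′ = ηᵢ otherwise. Then SVT(q′, T, k, η′, η⃗′) = ω. -/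
import Mathlib


/-- Deterministic Sparse-Vector-with-Gap output function.  It processes the list of
(query answer, query noise) pairs in order, given the threshold `T`, the threshold
noise `η`, and a remaining budget `k` of above-threshold answers.  At each step, if the
gap `qᵢ + ηᵢ - (T + η)` is nonnegative it outputs `some gap` (decrementing the budget),
otherwise it outputs `none` (i.e. ⊥); it stops when the budget reaches `0` or when the
queries are exhausted. -/
noncomputable def SVT (T : ℝ) : ℕ → ℝ → List (ℝ × ℝ) → List (Option ℝ)
  | 0, _, _ => []
  | _ + 1, _, [] => []
  | k + 1, η, (q, e) :: rest =>
      if 0 ≤ q + e - (T + η) then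
        some (q + e - (T + η)) :: SVT T k η rest
      else
        none :: SVT T (k + 1) η rest

/-- Local alignment for Sparse-Vector-with-Gap (deterministic core):
if `q` and `q'` are query sequences of the same length with `|qᵢ - qᵢ'| ≤ 1`, `η` is the
threshold noise, `ηs` the query noises, and `ω = SVT(q, T, k, η, ηs)`, then running the
mechanism on `q'` with threshold noise `η + 1` and query noises shifted by
`1 + qᵢ - qᵢ'` exactly on the indices at which `ω` reports a gap produces the same
output `ω`. -/
theorem svt_local_alignment (T : ℝ) (k : ℕ) (η : ℝ) (q q' ηs : List ℝ)
    (hlen : q'.length = q.length) (hηs : ηs.length = q.length)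
    (hsens : ∀ i < q.length, |q.getD i 0 - q'.getD i 0| ≤ 1) :
    SVT T k (η + 1)
      (q'.zip ((List.range q.length).map fun i =>
        if ((SVT T k η (q.zip ηs)).getD i none).isSome then
          ηs.getD i 0 + (1 + q.getD i 0 - q'.getD i 0)
        else
          ηs.getD i 0)) =
    SVT T k η (q.zip ηs) := by
  induction q generalizing q' ηs k with
  | nil =>
    obtain rfl := List.length_eq_zero_iff.mp hlen
    cases k <;> simp [SVT]
  | cons a qt ih =>
    obtain ⟨a', q't, rfl⟩ : ∃ x l, q' = x :: l := by
      cases q' with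
      | nil => simp at hlen
      | cons x l => exact ⟨x, l, rfl⟩
    obtain ⟨e, et, rfl⟩ : ∃ x l, ηs = x :: l := by
      cases ηs with
      | nil => simp at hηs
      | cons x l => exact ⟨x, l, rfl⟩
    cases k with
    | zero => simp [SVT]
    | succ m =>
      have hlen' : q't.length = qt.length := by simpa using hlen
      have hηs' : et.length = qt.length := by simpa using hηs
      have hsens0 : |a - a'| ≤ 1 := by simpa using hsens 0 (by simp)
      have hsens' : ∀ i < qt.length, |qt.getD i 0 - q't.getD i 0| ≤ 1 := by
        intro i hi
        simpa using hsens (i + 1) (by simpa)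
      by_cases h : 0 ≤ a + e - (T + η)
      · simp only [SVT, List.zip_cons_cons, if_pos h, List.length_cons,
          List.range_succ_eq_map, List.map_cons, List.map_map]
        simp only [Function.comp_def, List.getD_cons_zero, List.getD_cons_succ,
          Option.isSome_some, Option.isSome_none, Bool.false_eq_true, if_true, if_false]
        have hc : 0 ≤ a' + (e + (1 + a - a')) - (T + (η + 1)) := by linarith
        rw [if_pos hc]
        have hgap : a' + (e + (1 + a - a')) - (T + (η + 1)) = a + e - (T + η) := by ring
        rw [hgap]
        congr 1
        exact ih m q't et hlen' hηs' hsens'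
      · simp only [SVT, List.zip_cons_cons, if_neg h, List.length_cons,
          List.range_succ_eq_map, List.map_cons, List.map_map]
        simp only [Function.comp_def, List.getD_cons_zero, List.getD_cons_succ,
          Option.isSome_some, Option.isSome_none, Bool.false_eq_true, if_true, if_false]
        have ha : a - a' ≤ 1 ∧ a' - a ≤ 1 := abs_sub_le_iff.mp (abs_sub_comm a a' ▸ hsens0)
        have hc : ¬ 0 ≤ a' + e - (T + (η + 1)) := by
          push_neg at h ⊢
          linarith [ha.2]
        rw [if_neg hc]
        congr 1
        exact ih (m + 1) q't et hlen' hηs' hsens'
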